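/- arXiv:1308.6498 — 2 statements merged into one kernel-verified Lean document; each statement's English description precedes it below -/
import Mathlib

section
/- Let c₁, …, c_N be pairwise distinct positive reals and I ⊆ ℝ a nonempty open interval. Then there exist b₁, …, b_N ∈ I such that the N×N matrix H with entries H_{j,i} = exp(-b_i·c_j) is invertible. -/
/-!
Take the `b i` in arithmetic progression, `b i = a + i t` with `t ≠ 0`. Then
`exp (-(b i) c j) = exp (-a c j) · (exp (-t c j)) ^ i`, so the matrix is a diagonal matrix
with positive entries times the Vandermonde matrix of the nodes `exp (-t c j)`, which are
distinct because `c` is injective.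
-/

open Matrix Set

theorem exp_neg_arith_matrix_eq_diagonal_mul_vandermonde {N : ℕ} (c : Fin N → ℝ) (a t : ℝ) :
    (of fun j i : Fin N => Real.exp (-(a + i * t) * c j)) =
      diagonal (fun j => Real.exp (-a * c j)) * vandermonde (fun j => Real.exp (-t * c j)) := by
  ext j i
  rw [of_apply, diagonal_mul, vandermonde_apply, ← Real.exp_nat_mul, ← Real.exp_add]
  ring_nf

theorem det_exp_neg_arith_matrix_ne_zero {N : ℕ} {c : Fin N → ℝ} (hc : Function.Injective c)
    (a : ℝ) {t : ℝ} (ht : t ≠ 0) :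
    (of fun j i : Fin N => Real.exp (-(a + i * t) * c j)).det ≠ 0 := by
  have hnodes : Function.Injective fun j => Real.exp (-t * c j) :=
    Real.exp_injective.comp ((mul_right_injective₀ (neg_ne_zero.2 ht)).comp hc)
  rw [exp_neg_arith_matrix_eq_diagonal_mul_vandermonde, det_mul, det_diagonal]
  exact mul_ne_zero (Finset.prod_ne_zero_iff.2 fun j _ => Real.exp_ne_zero _)
    (det_vandermonde_ne_zero_iff.2 hnodes)

theorem add_add_nat_mul_mem_Ioo {l u : ℝ} (hlu : l < u) {N : ℕ} (i : Fin N) :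
    l + (u - l) / (N + 1) + i * ((u - l) / (N + 1)) ∈ Ioo l u := by
  have ht : 0 < (u - l) / (N + 1) := div_pos (sub_pos.2 hlu) (by positivity)
  have hi : (i : ℝ) + 1 ≤ N := by exact_mod_cast i.isLt
  have hNt : (N + 1) * ((u - l) / (N + 1)) = u - l := mul_div_cancel₀ _ (by positivity)
  constructor <;> nlinarith

theorem exists_b_exp_matrix_invertible_general (N : ℕ) (c : Fin N → ℝ)
    (hc : Function.Injective c)
    (l u : ℝ) (hlu : l < u) :
    ∃ b : Fin N → ℝ, (∀ i, b i ∈ Set.Ioo l u) ∧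
      IsUnit (Matrix.of fun j i : Fin N => Real.exp (-(b i) * c j)).det := by
  set t := (u - l) / (N + 1)
  have ht : t ≠ 0 := (div_pos (sub_pos.2 hlu) (by positivity)).ne'
  exact ⟨fun i => l + t + i * t, add_add_nat_mul_mem_Ioo hlu,
    (det_exp_neg_arith_matrix_ne_zero hc (l + t) ht).isUnit⟩

/-- For pairwise distinct positive reals `c j` and a nonempty open interval
`(l, u)`, there exist `b 1, …, b N` in the interval such that the matrix with
entries `exp (-(b i) * c j)` is invertible. -/
theorem exists_b_exp_matrix_invertible (N : ℕ) (c : Fin N → ℝ)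
    (hc : Function.Injective c) (hcpos : ∀ j, 0 < c j)
    (l u : ℝ) (hlu : l < u) :
    ∃ b : Fin N → ℝ, (∀ i, b i ∈ Set.Ioo l u) ∧
      IsUnit (Matrix.of fun j i : Fin N => Real.exp (-(b i) * c j)).det :=
  exists_b_exp_matrix_invertible_general N c hc l u hlu
end

section
/- Let c₁,…,c_N be pairwise distinct positive reals, N ≥ 1. Suppose w ∈ ℝᴺ with w_N ≠ 0 satisfies (-c_N)^s · exp(-b·c_N) = -Σ_{j=1}^{N-1} (w_j/w_N)·(-c_j)^s · exp(-b·c_j) for all natural numbers s ≥ 1 and all b in some nonempty open interval I. Then a contradiction follows; i.e., no such w exists. -/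
/-!
At a single point `b` of the interval, the identities for `s = 1, …, N + 1` say that the
vector `(aⱼ xⱼ)ⱼ`, with `xⱼ = -cⱼ` and `aⱼ = (wⱼ / w_N) exp (-b cⱼ)`, is annihilated by the
transposed Vandermonde matrix of the distinct nodes `xⱼ`. Hence `a_N x_N = 0`, which is
impossible since `a_N = exp (-b c_N)` and `x_N = -c_N` are nonzero.
-/

open Real

theorem mul_eq_zero_of_forall_sum_mul_pow_succ_eq_zero {R : Type*} [CommRing R] [IsDomain R]
    {n : ℕ} {a x : Fin n → R} (hx : Function.Injective x)
    (h : ∀ i : Fin n, ∑ j, a j * x j ^ ((i : ℕ) + 1) = 0) : a * x = 0 :=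
  Matrix.eq_zero_of_forall_pow_sum_mul_pow_eq_zero hx fun i => by
    simpa only [Pi.mul_apply, mul_assoc, ← pow_succ'] using h i

/-- No nonzero last coefficient can satisfy the infinite family of derivative
identities: for pairwise distinct positive reals `c j`, if
`(-c_N)^s exp (-b c_N) = -∑_{j<N} (w j / w_N) (-c j)^s exp (-b c j)` holds for
all `s ≥ 1` and all `b` in a nonempty open interval, we get a contradiction. -/
theorem no_such_w_exists (N : ℕ) (c : Fin (N + 1) → ℝ)
    (hc : Function.Injective c) (hcpos : ∀ j, 0 < c j)
    (w : Fin (N + 1) → ℝ) (hw : w (Fin.last N) ≠ 0)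
    (l u : ℝ) (hlu : l < u)
    (h : ∀ s : ℕ, 1 ≤ s → ∀ b ∈ Set.Ioo l u,
      (-(c (Fin.last N))) ^ s * Real.exp (-b * c (Fin.last N))
        = -∑ j : Fin N, (w j.castSucc / w (Fin.last N)) *
            ((-(c j.castSucc)) ^ s * Real.exp (-b * c j.castSucc))) :
    False := by
  obtain ⟨b, hb⟩ : (Set.Ioo l u).Nonempty := Set.nonempty_Ioo.mpr hlu
  set a : Fin (N + 1) → ℝ := fun j => w j / w (Fin.last N) * exp (-b * c j)
  have hsum (i : Fin (N + 1)) : ∑ j, a j * (-c j) ^ ((i : ℕ) + 1) = 0 := by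
    have hi := h _ (Nat.le_add_left 1 i) b hb
    simp only [a, Fin.sum_univ_castSucc, div_self hw, one_mul, mul_assoc, mul_comm (exp _)]
    linear_combination hi
  have hlast := congrFun (mul_eq_zero_of_forall_sum_mul_pow_succ_eq_zero
    (neg_injective.comp hc) hsum) (Fin.last N)
  simp [a, hw, (hcpos _).ne', exp_ne_zero] at hlast
end
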